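/- arXiv:1411.4398 — 3 statements merged into one kernel-verified Lean document; each statement's English description precedes it below -/
import Mathlib

section
/- Let p, q be distinct odd primes, N = p²q, and m an integer with gcd(m, N) = 1 and 0 < m < p²/2. Let c = m² mod N. Then m is the unique integer x with 0 < x < p²/2 and x² ≡ c (mod p²). -/
theorem rabin_p_decryption_unique (p q : ℕ) (hp : p.Prime) (hq : q.Prime)
    (hpq : p ≠ q) (hop : Odd p) (hoq : Odd q)
    (N : ℕ) (hN : N = p ^ 2 * q)
    (m : ℕ) (hmc : Nat.Coprime m N) (hm0 : 0 < m) (hm : 2 * m < p ^ 2)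
    (c : ℕ) (hc : c = m ^ 2 % N) :
    ∀ x : ℕ, 0 < x → 2 * x < p ^ 2 → (x : ℤ) ^ 2 ≡ (c : ℤ) [ZMOD (p : ℤ) ^ 2] →
      x = m := by
  intro x hx0 hx hmod
  have hprime : Prime (p : ℤ) := Nat.prime_iff_prime_int.mp hp
  have hdvdN : ((p : ℤ) ^ 2) ∣ (N : ℤ) := by
    subst hN; push_cast; exact ⟨q, rfl⟩
  have hcN : (c : ℤ) ≡ (m : ℤ) ^ 2 [ZMOD (N : ℤ)] := by
    subst hc
    push_cast
    exact Int.emod_emod_of_dvd _ dvd_rfl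
  have hcp : (c : ℤ) ≡ (m : ℤ) ^ 2 [ZMOD (p : ℤ) ^ 2] := hcN.of_dvd hdvdN
  have hxm : (x : ℤ) ^ 2 ≡ (m : ℤ) ^ 2 [ZMOD (p : ℤ) ^ 2] := hmod.trans hcp
  have hdvd : ((p : ℤ) ^ 2) ∣ ((x : ℤ) - m) * ((x : ℤ) + m) := by
    have h := hxm.dvd
    have heq : (m : ℤ) ^ 2 - (x : ℤ) ^ 2 = -(((x : ℤ) - m) * ((x : ℤ) + m)) := by ring
    rw [heq] at h
    exact dvd_neg.mp h
  have hp2 : p ≠ 2 := by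
    rintro rfl
    exact (Nat.not_odd_iff_even.mpr even_two) hop
  have hpm : ¬ ((p : ℤ) ∣ (m : ℤ)) := by
    intro h
    have hpm' : p ∣ m := Int.ofNat_dvd.mp h
    have hpN : p ∣ N := by subst hN; exact ⟨p * q, by ring⟩
    have hcop : Nat.Coprime p m := (hmc.coprime_dvd_right hpN).symm
    have := hcop.eq_one_of_dvd hpm'
    exact hp.one_lt.ne' this
  have hx' : 2 * (x : ℤ) < (p : ℤ) ^ 2 := by exact_mod_cast hx
  have hm' : 2 * (m : ℤ) < (p : ℤ) ^ 2 := by exact_mod_cast hm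
  have hx0' : 0 < (x : ℤ) := by exact_mod_cast hx0
  have hm0' : 0 < (m : ℤ) := by exact_mod_cast hm0
  have hcases : ((p : ℤ) ^ 2 ∣ ((x : ℤ) - m)) ∨ ((p : ℤ) ^ 2 ∣ ((x : ℤ) + m)) := by
    by_cases h1 : (p : ℤ) ∣ ((x : ℤ) - m)
    · by_cases h2 : (p : ℤ) ∣ ((x : ℤ) + m)
      · exfalso
        have hsub : (p : ℤ) ∣ 2 * m := by
          have h3 := dvd_sub h2 h1
          have h4 : ((x : ℤ) + m) - ((x : ℤ) - m) = 2 * m := by ring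
          rwa [h4] at h3
        rcases hprime.dvd_mul.mp hsub with h | h
        · have h5 : p ∣ 2 := Int.ofNat_dvd.mp (by exact_mod_cast h)
          have := (Nat.prime_dvd_prime_iff_eq hp Nat.prime_two).mp h5
          exact hp2 this
        · exact hpm h
      · exact Or.inl (hprime.pow_dvd_of_dvd_mul_right 2 h2 hdvd)
    · exact Or.inr (hprime.pow_dvd_of_dvd_mul_left 2 h1 hdvd)
  rcases hcases with h | h
  · have hb : |(x : ℤ) - m| < (p : ℤ) ^ 2 := by
      rw [abs_lt]; constructor <;> omega
    have h0 : (x : ℤ) - m = 0 := Int.eq_zero_of_abs_lt_dvd h hb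
    have : (x : ℤ) = m := by omega
    exact_mod_cast this
  · exfalso
    have hpos : (0 : ℤ) < (x : ℤ) + m := by positivity
    have := Int.le_of_dvd hpos h
    omega
end

section
/- Let p ≡ 3 (mod 4) be prime and c coprime to p with c a square modulo p. Setting m_p = c^((p+1)/4) mod p, i = (c - m_p²)/p, j = i·(2m_p)^{-1} mod p, and m₁ = m_p + j·p, the algorithm's output — m₁ if m₁ < p²/2, else p² - m₁ — squares to c modulo p². -/
theorem rabin_p_algorithm_correct (p : ℕ) (hp : p.Prime) (hp3 : p % 4 = 3)
    (c : ℤ) (hc : IsCoprime c (p : ℤ)) (hqr : ∃ x : ℤ, x ^ 2 ≡ c [ZMOD (p : ℤ)]) :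
    let mp : ℤ := c ^ ((p + 1) / 4) % (p : ℤ)
    let i : ℤ := (c - mp ^ 2) / (p : ℤ)
    let j : ℕ := (((i : ZMod p)) * (2 * (mp : ZMod p))⁻¹).val
    let m₁ : ℤ := mp + (j : ℤ) * (p : ℤ)
    let out : ℤ := if 2 * m₁ < (p : ℤ) ^ 2 then m₁ else (p : ℤ) ^ 2 - m₁
    out ^ 2 ≡ c [ZMOD (p : ℤ) ^ 2] := by
  intro mp i j m₁ out
  have hpf : Fact p.Prime := ⟨hp⟩
  obtain ⟨k, hk⟩ : ∃ k, p = 4 * k + 3 := ⟨p / 4, by omega⟩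
  -- a = c in ZMod p
  set a : ZMod p := (c : ZMod p) with ha
  have ha0 : a ≠ 0 := by
    intro h
    rw [ha, ZMod.intCast_zmod_eq_zero_iff_dvd] at h
    have hu : IsUnit ((p : ℕ) : ℤ) := hc.isUnit_of_dvd' h dvd_rfl
    have := hp.one_lt
    rcases Int.isUnit_iff.mp hu with h1 | h1 <;> omega
  have ha0' : a ≠ 0 := ha0
  have hsq : IsSquare a := by
    obtain ⟨x, hx⟩ := hqr
    refine ⟨(x : ZMod p), ?_⟩
    have := (ZMod.intCast_eq_intCast_iff (x ^ 2) c p).mpr hx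
    push_cast at this
    rw [ha, ← this]; ring
  have heuler : a ^ (p / 2) = 1 := (ZMod.euler_criterion p ha0).mp hsq
  -- mp squares to c mod p
  have hmp : mp = c ^ ((p + 1) / 4) % (p : ℤ) := rfl
  have hmpc : (mp : ZMod p) = a ^ (k + 1) := by
    rw [hmp, ZMod.intCast_mod]
    push_cast
    congr 1
    omega
  have hmp2 : ((mp : ℤ) : ZMod p) ^ 2 = a := by
    rw [hmpc, ← pow_mul]
    have : (k + 1) * 2 = p / 2 + 1 := by omega
    rw [this, pow_succ, heuler, one_mul]
  have hdvd : (p : ℤ) ∣ c - mp ^ 2 := by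
    rw [← ZMod.intCast_zmod_eq_zero_iff_dvd]
    push_cast
    rw [hmp2, ← ha, sub_self]
  have hi : i * (p : ℤ) = c - mp ^ 2 := Int.ediv_mul_cancel hdvd
  -- mp nonzero, 2 nonzero
  have hmpz : (mp : ZMod p) ≠ 0 := by
    intro h
    apply ha0
    rw [← hmp2, h]; ring
  have h2 : (2 : ZMod p) ≠ 0 := by
    intro h
    have h2' : ((2 : ℕ) : ZMod p) = 0 := by exact_mod_cast h
    rw [ZMod.natCast_eq_zero_iff] at h2'
    have := Nat.le_of_dvd (by norm_num) h2'
    omega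
  have h2mp : (2 : ZMod p) * (mp : ZMod p) ≠ 0 := mul_ne_zero h2 hmpz
  -- j cancels: 2*mp*j = i in ZMod p
  have hj : ((j : ℤ) : ZMod p) = (i : ZMod p) * (2 * (mp : ZMod p))⁻¹ := by
    push_cast
    simp only [j, ZMod.natCast_val, ZMod.cast_id]
  have hjc : (2 : ZMod p) * (mp : ZMod p) * ((j : ℤ) : ZMod p) = (i : ZMod p) := by
    rw [hj]
    field_simp
  have hdvd2 : (p : ℤ) ∣ i - 2 * mp * (j : ℤ) := by
    rw [← ZMod.intCast_zmod_eq_zero_iff_dvd]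
    push_cast
    rw [← hjc]; push_cast; ring
  obtain ⟨t, ht⟩ := hdvd2
  -- p² divides c - m₁²
  have hm₁ : m₁ = mp + (j : ℤ) * (p : ℤ) := rfl
  have key : ((p : ℤ)) ^ 2 ∣ c - m₁ ^ 2 := by
    refine ⟨t - (j : ℤ) ^ 2, ?_⟩
    have : c - m₁ ^ 2 = (i - 2 * mp * (j : ℤ)) * (p : ℤ) - (j : ℤ) ^ 2 * (p : ℤ) ^ 2 := by
      rw [hm₁]
      linear_combination -hi
    rw [this, ht]; ring
  have hout : out = if 2 * m₁ < (p : ℤ) ^ 2 then m₁ else (p : ℤ) ^ 2 - m₁ := rfl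
  rw [Int.modEq_iff_dvd]
  rw [hout]
  split_ifs with h
  · exact key
  · obtain ⟨u, hu⟩ := key
    exact ⟨u + (2 * m₁ - (p : ℤ) ^ 2), by linear_combination hu⟩
end

section
/- Let p, q be distinct primes both congruent to 3 modulo 4, N = p²q, and m an integer with gcd(m, N) = 1 and 0 < m < p²/2. Then the map m ↦ m² mod N is injective on this message space. -/
theorem rabin_p_encryption_injective (p q : ℕ) (hp : p.Prime) (hq : q.Prime)
    (hpq : p ≠ q) (hp3 : p % 4 = 3) (hq3 : q % 4 = 3)
    (N : ℕ) (hN : N = p ^ 2 * q) :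
    ∀ m₁ m₂ : ℕ, Nat.Coprime m₁ N → 0 < m₁ → 2 * m₁ < p ^ 2 →
      Nat.Coprime m₂ N → 0 < m₂ → 2 * m₂ < p ^ 2 →
        m₁ ^ 2 % N = m₂ ^ 2 % N → m₁ = m₂ := by
  intro m₁ m₂ hc₁ hm₁ hlt₁ hc₂ hm₂ hlt₂ heq
  have hpN : p ∣ N := by rw [hN]; exact Dvd.dvd.mul_right (dvd_pow_self p (by norm_num)) q
  have hpm₁ : ¬ (p ∣ m₁) := by
    intro h
    have := Nat.eq_one_of_dvd_coprimes hc₁ h hpN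
    exact hp.one_lt.ne' this
  have hpm₂ : ¬ (p ∣ m₂) := by
    intro h
    have := Nat.eq_one_of_dvd_coprimes hc₂ h hpN
    exact hp.one_lt.ne' this
  have hpZ : Prime (p : ℤ) := Nat.prime_iff_prime_int.mp hp
  have hd : (N : ℤ) ∣ ((m₂ : ℤ)^2 - (m₁ : ℤ)^2) := by
    have h := (Nat.modEq_iff_dvd (n := N) (a := m₁ ^ 2) (b := m₂ ^ 2)).mp heq
    push_cast at h
    exact h
  have hp2 : (p : ℤ)^2 ∣ ((m₂ : ℤ) - m₁) * ((m₂ : ℤ) + m₁) := by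
    have hdvdN : (p : ℤ)^2 ∣ (N : ℤ) := by rw [hN]; push_cast; exact ⟨q, rfl⟩
    have := hdvdN.trans hd
    have heqring : ((m₂ : ℤ)^2 - (m₁ : ℤ)^2) = ((m₂ : ℤ) - m₁) * ((m₂ : ℤ) + m₁) := by ring
    rwa [heqring] at this
  have hpodd : ¬ ((p : ℤ) ∣ 2) := by
    intro h
    have : (p : ℕ) ∣ 2 := by exact_mod_cast h
    have := Nat.le_of_dvd (by norm_num) this
    omega
  have hboth : ¬ ((p : ℤ) ∣ ((m₂ : ℤ) - m₁) ∧ (p : ℤ) ∣ ((m₂ : ℤ) + m₁)) := by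
    rintro ⟨h1, h2⟩
    have : (p : ℤ) ∣ 2 * m₂ := by
      have := dvd_add h1 h2
      have e : ((m₂ : ℤ) - m₁) + ((m₂ : ℤ) + m₁) = 2 * m₂ := by ring
      rwa [e] at this
    rcases hpZ.dvd_mul.mp this with h | h
    · exact hpodd h
    · exact hpm₂ (by exact_mod_cast h)
  have hprod : (p : ℤ) ∣ ((m₂ : ℤ) - m₁) * ((m₂ : ℤ) + m₁) :=
    (dvd_pow_self (p:ℤ) (by norm_num)).trans hp2
  have hlt₁' : 2 * (m₁:ℤ) < (p:ℤ)^2 := by exact_mod_cast hlt₁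
  have hlt₂' : 2 * (m₂:ℤ) < (p:ℤ)^2 := by exact_mod_cast hlt₂
  rcases hpZ.dvd_mul.mp hprod with hcase | hcase
  · -- p ∣ m₂ - m₁, so p ∤ m₂ + m₁, so p² ∣ m₂ - m₁
    have hnot : ¬ (p : ℤ) ∣ ((m₂ : ℤ) + m₁) := fun h => hboth ⟨hcase, h⟩
    have h2 : (p : ℤ)^2 ∣ ((m₂ : ℤ) - m₁) := by
      rw [mul_comm] at hp2
      exact hpZ.pow_dvd_of_dvd_mul_left 2 hnot hp2
    have habs : |(m₂ : ℤ) - m₁| < (p : ℤ)^2 := by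
      rw [abs_lt]
      constructor <;> omega
    have := Int.eq_zero_of_abs_lt_dvd h2 habs
    omega
  · -- p ∣ m₂ + m₁, so p ∤ m₂ - m₁, so p² ∣ m₂ + m₁ : contradiction with size
    have hnot : ¬ (p : ℤ) ∣ ((m₂ : ℤ) - m₁) := fun h => hboth ⟨h, hcase⟩
    have h2 : (p : ℤ)^2 ∣ ((m₂ : ℤ) + m₁) :=
      hpZ.pow_dvd_of_dvd_mul_left 2 hnot hp2
    have hle : (p : ℤ)^2 ≤ (m₂ : ℤ) + m₁ := Int.le_of_dvd (by omega) h2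
    omega
end
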